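/- arXiv:1209.0446 — 4 statements merged into one kernel-verified Lean document; each statement's English description precedes it below -/
import Mathlib

section
/- Consider a sextic of the form f = a_2 X^4Y^2 + a_3 X^3Y^3 + a_4 X^2Y^4 + a_5 XY^5 over a field of characteristic ≠ 2,3,5. If -8a_2a_4 + 3a_3^2 = 3r^2, 960a_2^2a_3a_5 + 256a_2^2a_4^2 - 432a_2a_4a_3^2 + 81a_3^4 = 81r^4, and 40a_2^2a_3^3a_5 + 8a_2^2a_3^2a_4^2 - 8a_2a_3^4a_4 + 24a_2^3a_4^3 + 100a_2^4a_5^2 - 140a_2^3a_4a_3a_5 + a_3^6 = r^6, then (a_3^2 - r^2)^3 (a_3^2 - 9r^2) = 0. -/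
/-! Writing `s = a₃² - r²`, the quadratic invariant says `8 a₂ a₄ = 3 s`. Substituting this
for `a₄` in the quartic and sextic invariants leaves `2⁶ a₂² a₃ a₅ = 3 s²` and `2⁹ a₂⁴ a₅² = s³`.
Squaring the first and comparing with `8 a₃²` times the second gives `9 s⁴ = 8 a₃² s³`, that is
`s³ (a₃² - 9 r²) = 0`. -/

namespace TripleRoot

variable {R : Type*} [CommRing R] {a2 a3 a4 a5 r : R}

lemma a2_sq_a3_a5_eq [IsDomain R] (h3 : (3 : R) ≠ 0) (h5 : (5 : R) ≠ 0)
    (ha4 : 8 * a2 * a4 = 3 * (a3^2 - r^2))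
    (e4 : 960 * a2^2 * a3 * a5 + 256 * a2^2 * a4^2 - 432 * a2 * a4 * a3^2 + 81 * a3^4
        = 81 * r^4) :
    64 * a2^2 * a3 * a5 = 3 * (a3^2 - r^2)^2 := by
  have h15 : (15 : R) ≠ 0 := by
    rw [show (15 : R) = 3 * 5 by norm_num]
    exact mul_ne_zero h3 h5
  refine mul_left_cancel₀ h15 ?_
  linear_combination e4 - (4 * (8 * a2 * a4 + 3 * (a3^2 - r^2)) - 54 * a3^2) * ha4

lemma a2_pow_four_a5_sq_eq [IsDomain R] (h5 : (5 : R) ≠ 0)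
    (ha4 : 8 * a2 * a4 = 3 * (a3^2 - r^2))
    (ha5 : 64 * a2^2 * a3 * a5 = 3 * (a3^2 - r^2)^2)
    (e6 : 40 * a2^2 * a3^3 * a5 + 8 * a2^2 * a3^2 * a4^2 - 8 * a2 * a3^4 * a4
        + 24 * a2^3 * a4^3 + 100 * a2^4 * a5^2 - 140 * a2^3 * a4 * a3 * a5 + a3^6
        = r^6) :
    512 * a2^4 * a5^2 = (a3^2 - r^2)^3 := by
  refine mul_left_cancel₀ (pow_ne_zero 2 h5) ?_
  set s := a3^2 - r^2
  set P := 8 * a2 * a4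
  linear_combination 128 * e6 - (80 * a3^2 - 35 * P) * ha5
    - (16 * a3^2 * (P + 3 * s) - 128 * a3^4 + 6 * (P^2 + 3 * s * P + 9 * s^2) - 105 * s^2) * ha4

lemma eliminate_a2_a5 (ha5 : 64 * a2^2 * a3 * a5 = 3 * (a3^2 - r^2)^2)
    (ha5_sq : 512 * a2^4 * a5^2 = (a3^2 - r^2)^3) :
    (a3^2 - r^2)^3 * (a3^2 - 9 * r^2) = 0 := by
  linear_combination -(64 * a2^2 * a3 * a5 + 3 * (a3^2 - r^2)^2) * ha5 + 8 * a3^2 * ha5_sq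

end TripleRoot

theorem triple_root_elimination_general
    (k : Type*) [Field k]
    (h3 : (3 : k) ≠ 0) (h5 : (5 : k) ≠ 0)
    (a2 a3 a4 a5 r : k)
    (e2 : -8 * a2 * a4 + 3 * a3^2 = 3 * r^2)
    (e4 : 960 * a2^2 * a3 * a5 + 256 * a2^2 * a4^2 - 432 * a2 * a4 * a3^2 + 81 * a3^4
        = 81 * r^4)
    (e6 : 40 * a2^2 * a3^3 * a5 + 8 * a2^2 * a3^2 * a4^2 - 8 * a2 * a3^4 * a4
        + 24 * a2^3 * a4^3 + 100 * a2^4 * a5^2 - 140 * a2^3 * a4 * a3 * a5 + a3^6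
        = r^6) :
    (a3^2 - r^2)^3 * (a3^2 - 9 * r^2) = 0 := by
  have ha4 : 8 * a2 * a4 = 3 * (a3^2 - r^2) := by linear_combination -e2
  have ha5 := TripleRoot.a2_sq_a3_a5_eq h3 h5 ha4 e4
  exact TripleRoot.eliminate_a2_a5 ha5 (TripleRoot.a2_pow_four_a5_sq_eq h5 ha4 ha5 e6)

/-- The elimination step for sextics with a triple root: the three invariant equations
imply `(a₃² - r²)³ (a₃² - 9r²) = 0`. -/
theorem triple_root_elimination
    (k : Type*) [Field k]
    (h2 : (2 : k) ≠ 0) (h3 : (3 : k) ≠ 0) (h5 : (5 : k) ≠ 0)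
    (a2 a3 a4 a5 r : k)
    (e2 : -8 * a2 * a4 + 3 * a3^2 = 3 * r^2)
    (e4 : 960 * a2^2 * a3 * a5 + 256 * a2^2 * a4^2 - 432 * a2 * a4 * a3^2 + 81 * a3^4
        = 81 * r^4)
    (e6 : 40 * a2^2 * a3^3 * a5 + 8 * a2^2 * a3^2 * a4^2 - 8 * a2 * a3^4 * a4
        + 24 * a2^3 * a4^3 + 100 * a2^4 * a5^2 - 140 * a2^3 * a4 * a3 * a5 + a3^6
        = r^6) :
    (a3^2 - r^2)^3 * (a3^2 - 9 * r^2) = 0 :=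
  triple_root_elimination_general k h3 h5 a2 a3 a4 a5 r e2 e4 e6
end

section
/- Consider a sextic f = a_2 X^4Y^2 + a_3 X^3Y^3 + a_4 X^2Y^4 + a_5 XY^5 over a field of characteristic ≠ 2,3,5. If a_2 a_4 = (3/8) a_3^2 and a_2^2 a_3 a_5 = (3/64) a_3^4 and the degree-6 invariant relation 40a_2^2a_3^3a_5 + 8a_2^2a_3^2a_4^2 - 8a_2a_3^4a_4 + 24a_2^3a_4^3 + 100a_2^4a_5^2 - 140a_2^3a_4a_3a_5 + a_3^6 = 0 holds, then a_2 a_3 = 0; consequently f has a root of multiplicity at least four at (1,0) or (0,1). -/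
/-!
Clearing the denominators 8 and 64, the three relations become identities with integer
coefficients, and an explicit combination of them
is `25 a₂⁴ a₃⁸`; hence `a₂ a₃ = 0` as soon as 2 and 5 are invertible. If `a₂ = 0`, the sextic
relation collapses to `a₃⁶ = 0`. If `a₃ = 0` but `a₂ ≠ 0`, the first relation gives `a₄ = 0`,
after which the sextic relation reads `100 a₂⁴ a₅² = 0`.
-/

section CommRing

variable {R : Type*} [CommRing R]

def sexticRelation (a2 a3 a4 a5 : R) : R :=
  40 * a2^2 * a3^3 * a5 + 8 * a2^2 * a3^2 * a4^2 - 8 * a2 * a3^4 * a4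
    + 24 * a2^3 * a4^3 + 100 * a2^4 * a5^2 - 140 * a2^3 * a4 * a3 * a5 + a3^6

@[simp]
theorem sexticRelation_zero_left (a3 a4 a5 : R) : sexticRelation 0 a3 a4 a5 = a3^6 := by
  simp [sexticRelation]

@[simp]
theorem sexticRelation_zero_zero (a2 a5 : R) : sexticRelation a2 0 0 a5 = 100 * a2^4 * a5^2 := by
  simp [sexticRelation]

theorem twentyFive_mul_pow_mul_pow_eq_zero {a2 a3 a4 a5 : R}
    (e2 : 8 * (a2 * a4) = 3 * a3^2) (e4 : 64 * (a2^2 * a3 * a5) = 3 * a3^4)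
    (e6 : sexticRelation a2 a3 a4 a5 = 0) :
    25 * (a2^4 * a3^8) = 0 := by
  unfold sexticRelation at e6
  linear_combination (1024 : R) * a2^4 * a3^2 * e6
    - (2176 * a2^5 * a3^4 * a4 - 208 * a2^4 * a3^6
        + 3072 * a2^6 * a3^2 * a4^2 - 17920 * a2^6 * a3^3 * a5) * e2
    - (-125 * a2^4 * a3^4 + 1600 * a2^6 * a3 * a5) * e4

end CommRing

section Field

variable {k : Type*} [Field k]

theorem mul_eq_zero_of_sexticRelation (h2 : (2 : k) ≠ 0) (h5 : (5 : k) ≠ 0) {a2 a3 a4 a5 : k}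
    (e2 : a2 * a4 = 3 / 8 * a3^2) (e4 : a2^2 * a3 * a5 = 3 / 64 * a3^4)
    (e6 : sexticRelation a2 a3 a4 a5 = 0) :
    a2 * a3 = 0 := by
  have h8 : (8 : k) ≠ 0 := by simpa [show (8 : k) = 2^3 by norm_num] using h2
  have h25 : (25 : k) ≠ 0 := by simpa [show (25 : k) = 5^2 by norm_num] using h5
  have e2' : 8 * (a2 * a4) = 3 * a3^2 := by rw [e2]; field_simp
  have e4' : 64 * (a2^2 * a3 * a5) = 3 * a3^4 := by
    rw [e4, show (64 : k) = 8^2 by norm_num]; field_simp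
  simpa [h25] using twentyFive_mul_pow_mul_pow_eq_zero e2' e4' e6

end Field

theorem quadruple_root_computation_general
    (k : Type*) [Field k]
    (h2 : (2 : k) ≠ 0) (h5 : (5 : k) ≠ 0)
    (a2 a3 a4 a5 : k)
    (e2 : a2 * a4 = 3 / 8 * a3^2)
    (e4 : a2^2 * a3 * a5 = 3 / 64 * a3^4)
    (e6 : 40 * a2^2 * a3^3 * a5 + 8 * a2^2 * a3^2 * a4^2 - 8 * a2 * a3^4 * a4
        + 24 * a2^3 * a4^3 + 100 * a2^4 * a5^2 - 140 * a2^3 * a4 * a3 * a5 + a3^6 = 0) :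
    a2 * a3 = 0 ∧ ((a3 = 0 ∧ a4 = 0 ∧ a5 = 0) ∨ (a2 = 0 ∧ a3 = 0)) := by
  change sexticRelation a2 a3 a4 a5 = 0 at e6
  have h100 : (100 : k) ≠ 0 := by
    simpa [show (100 : k) = 2^2 * 5^2 by norm_num] using And.intro h2 h5
  have hmul := mul_eq_zero_of_sexticRelation h2 h5 e2 e4 e6
  refine ⟨hmul, ?_⟩
  by_cases ha2 : a2 = 0
  · subst ha2
    exact Or.inr ⟨rfl, by simpa using e6⟩
  · have ha3 : a3 = 0 := (mul_eq_zero.mp hmul).resolve_left ha2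
    have ha4 : a4 = 0 := by simpa [ha2, ha3] using e2
    subst ha3 ha4
    exact Or.inl ⟨rfl, rfl, by simpa [h100, ha2] using e6⟩

/-- The key computation showing that vanishing of `I₂, I₄, I₆, I₁₀` forces a root of
multiplicity at least 4: on the reduced sextic
`a₂X⁴Y² + a₃X³Y³ + a₄X²Y⁴ + a₅XY⁵` the three relations force `a₂ a₃ = 0`, and hence a
quadruple root at `(1,0)` or at `(0,1)`. -/
theorem quadruple_root_computation
    (k : Type*) [Field k]
    (h2 : (2 : k) ≠ 0) (h3 : (3 : k) ≠ 0) (h5 : (5 : k) ≠ 0)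
    (a2 a3 a4 a5 : k)
    (e2 : a2 * a4 = 3 / 8 * a3^2)
    (e4 : a2^2 * a3 * a5 = 3 / 64 * a3^4)
    (e6 : 40 * a2^2 * a3^3 * a5 + 8 * a2^2 * a3^2 * a4^2 - 8 * a2 * a3^4 * a4
        + 24 * a2^3 * a4^3 + 100 * a2^4 * a5^2 - 140 * a2^3 * a4 * a3 * a5 + a3^6 = 0) :
    a2 * a3 = 0 ∧ ((a3 = 0 ∧ a4 = 0 ∧ a5 = 0) ∨ (a2 = 0 ∧ a3 = 0)) :=
  quadruple_root_computation_general k h2 h5 a2 a3 a4 a5 e2 e4 e6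
end

section
/- The ring R = k[U_1, ..., U_8], where U_1 = I_2^5/I_10, U_2 = I_2^3 I_4/I_10, U_3 = I_2^2 I_6/I_10, U_4 = I_4^5/I_10^2, U_5 = I_4 I_6/I_10, U_6 = I_6^5/I_10^3, U_7 = I_2 I_4^2/I_10, U_8 = I_2 I_6^3/I_10^2, is integrally closed in its field of fractions. -/
/-- The `k`-algebra generated by the absolute invariants `U₁, …, U₈`. -/
noncomputable def Uring (k F : Type*) [Field k] [Field F] [Algebra k F]
    (I2 I4 I6 I10 : F) : Subalgebra k F :=
  Algebra.adjoin k ({I2^5 / I10, I2^3 * I4 / I10, I2^2 * I6 / I10, I4^5 / I10^2,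
    I4 * I6 / I10, I6^5 / I10^3, I2 * I4^2 / I10, I2 * I6^3 / I10^2} : Set F)

/-! Grade `k[I₂, I₄, I₆, I₁₀]` by the weights `1, 2, 3, 5` (half the degrees). The ring `R` is the
weight-zero part of its localization at `I₁₀`, spanned by the monomials `I₂^a I₄^b I₆^c / I₁₀^m`
with `a + 2b + 3c = 5m`: the exponents of `U₁, …, U₈` generate this monoid. If `u = s₁ / s₂`
with `sᵢ ∈ R` is integral over `R`, then `I₁₀^M u` is integral over the polynomial ring
`k[I₂, I₄, I₆, I₁₀]` for large `M` and lies in its fraction field, so it is a polynomial `z`, since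
polynomial rings are normal. Clearing denominators in `z s₂ = I₁₀^M s₁` and comparing weights
shows that `z` is homogeneous of weight `5M`, so `u = z / I₁₀^M ∈ R`. -/

section Integrality

open Polynomial Filter

theorem IsIntegral.exists_isIntegral_pow_mul {R S B : Type*} [CommRing R] [CommRing S]
    [CommRing B] [Algebra R B] [Algebra S B] {c : B} (hc : c ∈ (algebraMap R B).range)
    (hS : ∀ s : S, ∃ e, c ^ e * algebraMap S B s ∈ (algebraMap R B).range) {y : B}
    (hy : IsIntegral S y) : ∃ M, IsIntegral R (c ^ M * y) := by
  obtain ⟨p, hp, hpy⟩ := hy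
  set p' := p.map (algebraMap S B)
  have hev : ∀ᶠ M in atTop, ∀ i ∈ Finset.range p'.natDegree,
      c ^ M * p'.coeff i ∈ (algebraMap R B).range := by
    refine (eventually_all_finset _).2 fun i _ => ?_
    obtain ⟨e, he⟩ := hS (p.coeff i)
    filter_upwards [eventually_ge_atTop e] with M hM
    rw [coeff_map, ← Nat.sub_add_cancel hM, pow_add, mul_assoc]
    exact mul_mem (pow_mem hc _) he
  obtain ⟨M, hM⟩ := hev.exists
  -- the roots of `p'.scaleRoots (c ^ M)` are those of `p'` multiplied by `c ^ M`
  have hlifts : p'.scaleRoots (c ^ M) ∈ lifts (algebraMap R B) := by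
    refine (lifts_iff_coeff_lifts _).2 fun i => ?_
    rw [← RingHom.coe_range, SetLike.mem_coe, coeff_scaleRoots]
    rcases lt_or_ge i p'.natDegree with hi | hi
    · rw [← Nat.sub_add_cancel (Nat.sub_pos_of_lt hi), pow_succ, mul_left_comm, mul_comm _ (c ^ M)]
      exact mul_mem (pow_mem (pow_mem hc _) _) (hM i (Finset.mem_range.2 hi))
    · rcases hi.eq_or_lt with rfl | hi
      · rw [Nat.sub_self, pow_zero, mul_one, coeff_natDegree, (hp.map _).leadingCoeff]
        exact one_mem _
      · simp [coeff_eq_zero_of_natDegree_lt hi]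
  obtain ⟨q, hq, -, hqm⟩ :=
    lifts_and_natDegree_eq_and_monic hlifts ((monic_scaleRoots_iff _).2 (hp.map _))
  refine ⟨M, q, hqm, ?_⟩
  rw [← eval_map, hq, scaleRoots_eval_mul, eval_map, hpy, mul_zero]

theorem IsIntegrallyClosed.exists_algebraMap_eq_of_mul_eq {R L : Type*} [CommRing R] [IsDomain R]
    [IsIntegrallyClosed R] [Field L] [Algebra R L] (hinj : Function.Injective (algebraMap R L))
    {v : L} {a b : R} (hb : b ≠ 0) (hv : v * algebraMap R L b = algebraMap R L a)
    (hint : IsIntegral R v) : ∃ z, algebraMap R L z = v := by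
  let ι : FractionRing R →ₐ[R] L := IsFractionRing.liftAlgHom (g := Algebra.ofId R L) hinj
  have hιv : ι (algebraMap R _ a / algebraMap R _ b) = v := by
    rw [map_div₀, AlgHom.commutes, AlgHom.commutes, div_eq_iff ((map_ne_zero_iff _ hinj).2 hb), hv]
  obtain ⟨z, hz⟩ :=
    IsIntegrallyClosed.isIntegral_iff.mp ((isIntegral_algHom_iff ι ι.injective).mp (hιv ▸ hint))
  exact ⟨z, by rw [← hιv, ← hz, AlgHom.commutes]⟩

end Integrality

namespace MvPolynomial

section WeightedHomogeneous

variable {R M σ : Type*} [CommSemiring R] [AddCancelCommMonoid M] {w : σ → M}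

theorem weightedHomogeneousComponent_mul_of_isWeightedHomogeneous {g : MvPolynomial σ R} {m : M}
    (hg : IsWeightedHomogeneous w g m) (n : M) (p : MvPolynomial σ R) :
    weightedHomogeneousComponent w (n + m) (p * g) = weightedHomogeneousComponent w n p * g := by
  induction p using MvPolynomial.induction_on' with
  | monomial d r =>
    have hd := isWeightedHomogeneous_monomial w d r rfl
    by_cases h : Finsupp.weight w d = n
    · subst h
      rw [(hd.mul hg).weightedHomogeneousComponent_same, hd.weightedHomogeneousComponent_same]
    · rw [(hd.mul hg).weightedHomogeneousComponent_ne _ fun h' => h (add_right_cancel h').symm,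
        hd.weightedHomogeneousComponent_ne _ (Ne.symm h), zero_mul]
  | add p q hp hq => rw [add_mul, map_add, map_add, hp, hq, add_mul]

theorem IsWeightedHomogeneous.of_mul_right [NoZeroDivisors R] {p g : MvPolynomial σ R} {m n : M}
    (hpg : IsWeightedHomogeneous w (p * g) (n + m)) (hg : IsWeightedHomogeneous w g m)
    (hg0 : g ≠ 0) : IsWeightedHomogeneous w p n := by
  have hcomp : ∀ n', n' ≠ n → weightedHomogeneousComponent w n' p = 0 := fun n' hn' =>
    (mul_eq_zero.mp <| by
      rw [← weightedHomogeneousComponent_mul_of_isWeightedHomogeneous hg,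
        hpg.weightedHomogeneousComponent_ne _ fun h => hn' (add_right_cancel h)]).resolve_right hg0
  rw [← finsum_weightedHomogeneousComponent w p, finsum_eq_single _ n hcomp]
  exact weightedHomogeneousComponent_isWeightedHomogeneous n p

end WeightedHomogeneous

theorem IsWeightedHomogeneous.mul_X_pow {k σ : Type*} [CommSemiring k] {w : σ → ℕ} {j : σ}
    {q : MvPolynomial σ k} {e : ℕ}
    (hq : IsWeightedHomogeneous w q (e * w j)) (f : ℕ) :
    IsWeightedHomogeneous w (q * X j ^ f) ((e + f) * w j) := by
  simpa [add_mul] using hq.mul ((isWeightedHomogeneous_X k w j).pow f)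

/-- The degree-zero part of the localization `k[x][1/x j]`, graded by the weights `w`. -/
def homogeneousQuotients (k : Type*) {σ F : Type*} [CommSemiring k] [CommSemiring F] [Algebra k F]
    (w : σ → ℕ) (x : σ → F) (j : σ) : Subalgebra k F where
  carrier := {y | ∃ (e : ℕ) (q : MvPolynomial σ k),
    IsWeightedHomogeneous w q (e * w j) ∧ y * x j ^ e = aeval x q}
  mul_mem' := by
    rintro y z ⟨e, q, hq, hy⟩ ⟨f, r, hr, hz⟩
    refine ⟨e + f, q * r, by simpa [add_mul] using hq.mul hr, ?_⟩
    rw [map_mul, ← hy, ← hz]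
    ring
  add_mem' := by
    rintro y z ⟨e, q, hq, hy⟩ ⟨f, r, hr, hz⟩
    refine ⟨e + f, q * X j ^ f + r * X j ^ e, (hq.mul_X_pow f).add ?_, ?_⟩
    · simpa [add_comm] using hr.mul_X_pow e
    · simp only [map_add, map_mul, map_pow, aeval_X, ← hy, ← hz]
      ring
  algebraMap_mem' r := ⟨0, C r, by simpa using isWeightedHomogeneous_C w r, by simp⟩

section Quotients

variable {k σ F : Type*} [CommSemiring k] [Field F] [Algebra k F] {w : σ → ℕ} {x : σ → F} {j : σ}

theorem div_mem_homogeneousQuotients {q : MvPolynomial σ k} {e : ℕ}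
    (hq : IsWeightedHomogeneous w q (e * w j)) (hxj : x j ≠ 0) :
    aeval x q / x j ^ e ∈ homogeneousQuotients k w x j :=
  ⟨e, q, hq, div_mul_cancel₀ _ (pow_ne_zero _ hxj)⟩

theorem homogeneousQuotients_le {S : Subalgebra k F} (hxj : x j ≠ 0)
    (hS : ∀ (d : σ →₀ ℕ) (e : ℕ), Finsupp.weight w d = e * w j →
      (d.prod fun i n => x i ^ n) / x j ^ e ∈ S) :
    homogeneousQuotients k w x j ≤ S := by
  rintro y ⟨e, q, hq, hy⟩
  rw [eq_div_of_mul_eq (pow_ne_zero _ hxj) hy, q.as_sum, map_sum, Finset.sum_div]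
  refine sum_mem fun d hd => ?_
  rw [aeval_monomial, mul_div_assoc, ← Algebra.smul_def]
  exact S.smul_mem (hS d e (hq (mem_support_iff.mp hd))) _

end Quotients

theorem mem_homogeneousQuotients_of_isIntegral {k σ F : Type*} [Field k] [Field F] [Algebra k F]
    {w : σ → ℕ} {x : σ → F} {j : σ} (hx : AlgebraicIndependent k x) {y s₁ s₂ : F}
    (hs₁ : s₁ ∈ homogeneousQuotients k w x j) (hs₂ : s₂ ∈ homogeneousQuotients k w x j)
    (hs₂0 : s₂ ≠ 0) (hy : y * s₂ = s₁) (hint : IsIntegral (homogeneousQuotients k w x j) y) :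
    y ∈ homogeneousQuotients k w x j := by
  let _ : Algebra (MvPolynomial σ k) F := (aeval x).toAlgebra
  have hinj : Function.Injective (aeval x) := algebraicIndependent_iff_injective_aeval.mp hx
  have hxj : x j ≠ 0 := hx.ne_zero j
  obtain ⟨e₁, q₁, hq₁, h₁⟩ := hs₁
  obtain ⟨e₂, q₂, hq₂, h₂⟩ := hs₂
  obtain ⟨M, hM⟩ := hint.exists_isIntegral_pow_mul (R := MvPolynomial σ k) ⟨X j, aeval_X x j⟩
    fun ⟨_, e, q, _, hs⟩ => ⟨e, q, by rw [mul_comm]; exact hs.symm⟩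
  have hq₂0 : q₂ * X j ^ e₁ ≠ 0 := by
    refine mul_ne_zero ?_ (pow_ne_zero _ (X_ne_zero j))
    rintro rfl
    simp [hs₂0, hxj] at h₂
  have hyM : x j ^ M * y * aeval x (q₂ * X j ^ e₁) = aeval x (q₁ * X j ^ (e₂ + M)) := by
    simp only [map_mul, map_pow, aeval_X, ← h₁, ← h₂, ← hy]
    ring
  obtain ⟨z, hz⟩ := IsIntegrallyClosed.exists_algebraMap_eq_of_mul_eq hinj hq₂0 hyM hM
  have hzq : z * (q₂ * X j ^ e₁) = q₁ * X j ^ (e₂ + M) := hinj (by rw [map_mul, ← hyM, ← hz]; rfl)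
  have hz_hom : IsWeightedHomogeneous w z (M * w j) := by
    refine IsWeightedHomogeneous.of_mul_right (m := (e₂ + e₁) * w j) ?_ (hq₂.mul_X_pow e₁) hq₂0
    rw [hzq, ← add_mul, show M + (e₂ + e₁) = e₁ + (e₂ + M) by ring]
    exact hq₁.mul_X_pow _
  exact ⟨M, z, hz_hom, by rw [mul_comm]; exact hz.symm⟩

end MvPolynomial

section Invariants

open MvPolynomial

variable {k F : Type*} [Field k] [Field F] [Algebra k F] {I2 I4 I6 I10 : F}

def halfDegree : Fin 4 → ℕ := ![1, 2, 3, 5]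

/-- The exponents `(a, b, c, m)` of the generators `U_i = I2^a * I4^b * I6^c / I10^m`. -/
def uExponents : Finset (ℕ × ℕ × ℕ × ℕ) :=
  {(5, 0, 0, 1), (3, 1, 0, 1), (2, 0, 1, 1), (0, 5, 0, 2), (0, 1, 1, 1), (0, 0, 5, 3),
    (1, 2, 0, 1), (1, 0, 3, 2)}

theorem Uring_eq_adjoin_uExponents :
    Uring k F I2 I4 I6 I10 = Algebra.adjoin k
      ((fun g : ℕ × ℕ × ℕ × ℕ => I2 ^ g.1 * I4 ^ g.2.1 * I6 ^ g.2.2.1 / I10 ^ g.2.2.2) ''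
        uExponents) := by
  simp [Uring, uExponents, Set.image_insert_eq]

theorem weight_eq_of_mem_uExponents {a b c m : ℕ} (h : (a, b, c, m) ∈ uExponents) :
    a + 2 * b + 3 * c = 5 * m ∧ 0 < m := by
  simp only [uExponents, Finset.mem_insert, Finset.mem_singleton, Prod.mk.injEq] at h
  omega

theorem exists_mem_uExponents_le {a b c m : ℕ} (h : a + 2 * b + 3 * c = 5 * (m + 1)) :
    ∃ a' b' c' m', (a', b', c', m') ∈ uExponents ∧ a' ≤ a ∧ b' ≤ b ∧ c' ≤ c := by
  simp only [uExponents, Finset.mem_insert, Finset.mem_singleton, Prod.mk.injEq, or_and_right,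
    exists_or, existsAndEq, and_true, zero_le, true_and]
  rcases Nat.eq_zero_or_pos a with rfl | ha <;> rcases Nat.eq_zero_or_pos b with rfl | hb <;>
    rcases Nat.eq_zero_or_pos c with rfl | hc <;> omega

theorem monomial_div_mem_Uring (h10 : I10 ≠ 0) {a b c m : ℕ} (h : a + 2 * b + 3 * c = 5 * m) :
    I2 ^ a * I4 ^ b * I6 ^ c / I10 ^ m ∈ Uring k F I2 I4 I6 I10 := by
  induction m using Nat.strong_induction_on generalizing a b c with
  | _ m ih =>
  rcases m with _ | m
  · obtain ⟨rfl, rfl, rfl⟩ : a = 0 ∧ b = 0 ∧ c = 0 := by omega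
    simp
  obtain ⟨a', b', c', m', hg, ha, hb, hc⟩ := exists_mem_uExponents_le h
  obtain ⟨hw, hm⟩ := weight_eq_of_mem_uExponents hg
  have hgen : I2 ^ a' * I4 ^ b' * I6 ^ c' / I10 ^ m' ∈ Uring k F I2 I4 I6 I10 := by
    rw [Uring_eq_adjoin_uExponents]
    exact Algebra.subset_adjoin ⟨_, hg, rfl⟩
  obtain ⟨a, rfl⟩ := Nat.exists_eq_add_of_le ha
  obtain ⟨b, rfl⟩ := Nat.exists_eq_add_of_le hb
  obtain ⟨c, rfl⟩ := Nat.exists_eq_add_of_le hc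
  obtain ⟨n, hn⟩ : ∃ n, m + 1 = m' + n := ⟨m + 1 - m', by omega⟩
  have hsplit : I2 ^ (a' + a) * I4 ^ (b' + b) * I6 ^ (c' + c) / I10 ^ (m + 1) =
      I2 ^ a' * I4 ^ b' * I6 ^ c' / I10 ^ m' * (I2 ^ a * I4 ^ b * I6 ^ c / I10 ^ n) := by
    rw [hn]
    field_simp
    ring
  rw [hsplit]
  exact mul_mem hgen (ih n (by omega) (by omega))

theorem monomial_div_mem_homogeneousQuotients (h10 : I10 ≠ 0) {a b c m : ℕ}
    (h : a + 2 * b + 3 * c = 5 * m) :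
    I2 ^ a * I4 ^ b * I6 ^ c / I10 ^ m ∈
      homogeneousQuotients k halfDegree ![I2, I4, I6, I10] 3 := by
  have hq : IsWeightedHomogeneous halfDegree
      ((X 0 : MvPolynomial (Fin 4) k) ^ a * X 1 ^ b * X 2 ^ c) (m * halfDegree 3) := by
    have := (((isWeightedHomogeneous_X k halfDegree 0).pow a).mul
      ((isWeightedHomogeneous_X k halfDegree 1).pow b)).mul
      ((isWeightedHomogeneous_X k halfDegree 2).pow c)
    convert this using 1
    simp only [halfDegree, Fin.isValue, Matrix.cons_val, Matrix.cons_val_zero,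
      Matrix.cons_val_one, smul_eq_mul, mul_one]
    omega
  simpa using div_mem_homogeneousQuotients hq (x := ![I2, I4, I6, I10]) h10

theorem Uring_eq_homogeneousQuotients (h10 : I10 ≠ 0) :
    Uring k F I2 I4 I6 I10 = homogeneousQuotients k halfDegree ![I2, I4, I6, I10] 3 := by
  refine le_antisymm ?_ (homogeneousQuotients_le h10 fun d e hd => ?_)
  · rw [Uring_eq_adjoin_uExponents, Algebra.adjoin_le_iff]
    rintro _ ⟨⟨a, b, c, m⟩, hg, rfl⟩
    exact monomial_div_mem_homogeneousQuotients h10 (weight_eq_of_mem_uExponents hg).1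
  · have hw : d 0 + 2 * d 1 + 3 * d 2 + 5 * d 3 = 5 * e := by
      simpa [Finsupp.weight_apply, Finsupp.sum_fintype, Fin.sum_univ_four, halfDegree, mul_comm]
        using hd
    obtain ⟨m, rfl⟩ : ∃ m, e = d 3 + m := ⟨e - d 3, by omega⟩
    have hmon : (d.prod fun i n => ![I2, I4, I6, I10] i ^ n) / I10 ^ (d 3 + m) =
        I2 ^ d 0 * I4 ^ d 1 * I6 ^ d 2 / I10 ^ m := by
      rw [Finsupp.prod_fintype _ _ (by simp), Fin.prod_univ_four]
      change I2 ^ d 0 * I4 ^ d 1 * I6 ^ d 2 * I10 ^ d 3 / _ = _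
      rw [pow_add]
      field_simp
    change _ / I10 ^ _ ∈ _
    rw [hmon]
    exact monomial_div_mem_Uring h10 (by omega)

end Invariants

/-- The ring `R = k[U₁, …, U₈]` of absolute invariants is integrally closed in its
field of fractions. -/
theorem U_algebra_integrally_closed
    (k F : Type*) [Field k] [Field F] [Algebra k F]
    (I2 I4 I6 I10 : F)
    (hind : AlgebraicIndependent k ![I2, I4, I6, I10]) :
    ∀ u : F,
      (∃ s₁ ∈ Uring k F I2 I4 I6 I10, ∃ s₂ ∈ Uring k F I2 I4 I6 I10,
         s₂ ≠ 0 ∧ u * s₂ = s₁) →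
      IsIntegral (Uring k F I2 I4 I6 I10) u →
      u ∈ Uring k F I2 I4 I6 I10 := by
  rintro u ⟨s₁, hs₁, s₂, hs₂, hs₂0, hu⟩ hint
  have h10 : I10 ≠ 0 := hind.ne_zero 3
  rw [Uring_eq_homogeneousQuotients h10] at hs₁ hs₂ hint ⊢
  exact MvPolynomial.mem_homogeneousQuotients_of_isIntegral hind hs₁ hs₂ hs₂0 hu hint
end

section
/- The ring S = k[V_1,...,V_6], where V_1 = IH/R, V_2 = H^3/R, V_3 = H^4/D, V_4 = I^2/D, V_5 = I^3/R^2, V_6 = IH^2/D, with H, I, R, D algebraically independent over k, is integrally closed in its field of fractions. -/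
/-!
Put `x = (H, I, R⁻¹, D⁻¹)` and give its entries the weights `1, 2, -3, -4`. Then `x` is still
algebraically independent, `B = k[x]` is a polynomial ring, hence integrally closed, and `S` is the
image of the polynomials of weight `0`: the monoid of exponents `(a, b, c, d)` with
`a + 2b = 3c + 4d` is generated by the exponents of `V₁, …, V₆`.

If `u = s₁ / s₂` with `sᵢ ∈ S` is integral over `S ⊆ B`, then `u ∈ B`, say `u = p(x)`.
Writing `sᵢ = qᵢ(x)` with `qᵢ` of weight `0`, independence gives `p q₂ = q₁` in the domain
`k[X₀, …, X₃]`, which forces `p` to have weight `0`, i.e. `u ∈ S`.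
-/

/-- The `k`-algebra generated by the absolute invariants `V₁, …, V₆` of pairs of
binary cubics. -/
noncomputable def Vring (k F : Type*) [Field k] [Field F] [Algebra k F]
    (H I R D : F) : Subalgebra k F :=
  Algebra.adjoin k ({I * H / R, H^3 / R, H^4 / D, I^2 / D, I^3 / R^2,
    I * H^2 / D} : Set F)

open MvPolynomial

theorem AlgebraicIndependent.update_inv {ι R K : Type*} [CommRing R] [Field K] [Algebra R K]
    [DecidableEq ι] {x : ι → K} (hx : AlgebraicIndependent R x) (i : ι) :
    AlgebraicIndependent R (Function.update x i (x i)⁻¹) := by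
  rw [AlgebraicIndependent.iff_transcendental_adjoin_image i] at hx ⊢
  have hne : ∀ j : {j // j ≠ i}, Function.update x i (x i)⁻¹ j = x j :=
    fun j => Function.update_of_ne j.2 _ _
  have himage : Function.update x i (x i)⁻¹ '' {i}ᶜ = x '' {i}ᶜ :=
    Set.image_congr fun j hj => Function.update_of_ne hj _ _
  rw [himage]
  simp only [hne, Function.update_self]
  exact ⟨hx.1, fun h => hx.2 (IsAlgebraic.inv_iff.mp h)⟩

theorem IsIntegral.of_subalgebra_le {R A : Type*} [CommRing R] [CommRing A] [Algebra R A]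
    {S T : Subalgebra R A} (hST : S ≤ T) {u : A} (hu : IsIntegral S u) : IsIntegral T u := by
  let _ : Algebra S T := (Subalgebra.inclusion hST).toAlgebra
  have _ : IsScalarTower S T A := IsScalarTower.of_algebraMap_eq fun _ => rfl
  exact hu.tower_top

theorem Subalgebra.mem_of_isIntegral_of_mul_mem {R F : Type*} [CommRing R] [Field F]
    [Algebra R F] {B : Subalgebra R F} [IsIntegrallyClosed B] {u a b : F} (hu : IsIntegral B u)
    (ha : a ∈ B) (hb : b ∈ B) (hb0 : b ≠ 0) (h : u * b = a) : u ∈ B := by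
  let ψ : FractionRing B →ₐ[B] F :=
    IsFractionRing.liftAlgHom (g := Algebra.ofId B F) Subtype.val_injective
  have hb' : (⟨b, hb⟩ : B) ∈ nonZeroDivisors B :=
    mem_nonZeroDivisors_of_ne_zero (Subtype.coe_ne_coe.mp hb0)
  set v := IsLocalization.mk' (FractionRing B) (⟨a, ha⟩ : B) ⟨⟨b, hb⟩, hb'⟩
  have hv : ψ v = u := by
    refine mul_right_cancel₀ hb0 ?_
    have := congrArg ψ (IsLocalization.mk'_spec (FractionRing B) (⟨a, ha⟩ : B) ⟨⟨b, hb⟩, hb'⟩)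
    rw [map_mul, ψ.commutes, ψ.commutes] at this
    rw [h]
    exact this
  obtain ⟨y, hy⟩ := IsIntegrallyClosed.isIntegral_iff.mp
    ((isIntegral_algHom_iff ψ ψ.toRingHom.injective).mp (hv ▸ hu))
  rw [← hv, ← hy, ψ.commutes]
  exact y.2

namespace MvPolynomial

variable {σ R M : Type*} [CommRing R] [AddCancelCommMonoid M] {w : σ → M}

theorem weightedHomogeneousComponent_add_mul_of_right [DecidableEq M] {p q : MvPolynomial σ R}
    {m : M} (hq : IsWeightedHomogeneous w q m) (n : M) :
    weightedHomogeneousComponent w (n + m) (p * q) = weightedHomogeneousComponent w n p * q := by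
  let _ := weightedGradedAlgebra R w
  rw [← weightedDecomposition.decompose'_apply, ← weightedDecomposition.decompose'_apply]
  exact DirectSum.coe_decompose_mul_add_of_right_mem (weightedHomogeneousSubmodule R w)
      (a := p) (i := n) ((mem_weightedHomogeneousSubmodule R w m q).mpr hq)

theorem IsWeightedHomogeneous.of_mul_right_s17 [IsDomain R] {p q : MvPolynomial σ R} {m n : M}
    (hq : IsWeightedHomogeneous w q m) (hq0 : q ≠ 0)
    (hpq : IsWeightedHomogeneous w (p * q) (n + m)) : IsWeightedHomogeneous w p n := by
  classical
  intro d hd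
  have hcomp : weightedHomogeneousComponent w (Finsupp.weight w d) p ≠ 0 := fun h0 => hd <| by
    simpa [h0] using (coeff_weightedHomogeneousComponent (w := w) (Finsupp.weight w d) p d).symm
  by_contra hne
  apply mul_ne_zero hcomp hq0
  rw [← weightedHomogeneousComponent_add_mul_of_right hq]
  exact hpq.weightedHomogeneousComponent_ne _ fun h => hne (add_right_cancel h)

variable (R w) in
def weightZeroSubalgebra : Subalgebra R (MvPolynomial σ R) where
  carrier := {p | IsWeightedHomogeneous w p 0}
  mul_mem' ha hb := by simpa using ha.mul hb
  add_mem' := IsWeightedHomogeneous.add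
  algebraMap_mem' := isWeightedHomogeneous_C w

end MvPolynomial

theorem AlgebraicIndependent.aeval_mem_map_weightZeroSubalgebra {σ R A M : Type*} [CommRing R]
    [IsDomain R] [CommRing A] [Algebra R A] [AddCancelCommMonoid M] {w : σ → M} {x : σ → A}
    (hx : AlgebraicIndependent R x) {p : MvPolynomial σ R} {a b : A}
    (ha : a ∈ (weightZeroSubalgebra R w).map (aeval x))
    (hb : b ∈ (weightZeroSubalgebra R w).map (aeval x)) (hb0 : b ≠ 0) (h : aeval x p * b = a) :
    aeval x p ∈ (weightZeroSubalgebra R w).map (aeval x) := by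
  obtain ⟨r, hr, rfl⟩ := ha
  obtain ⟨q, hq, rfl⟩ := hb
  have hpq : p * q = r := hx (by rw [map_mul]; exact h)
  refine ⟨p, IsWeightedHomogeneous.of_mul_right_s17 (m := 0) hq (fun hq0 => hb0 ?_) ?_, rfl⟩
  · rw [hq0, map_zero]
  · rwa [hpq, add_zero]

namespace Vring

def weight : Fin 4 → ℤ := ![1, 2, -3, -4]

theorem weight_apply (s : Fin 4 →₀ ℕ) :
    Finsupp.weight weight s = (s 0 + 2 * s 1 - 3 * s 2 - 4 * s 3 : ℤ) := by
  rw [Finsupp.weight_apply, Finsupp.sum_fintype _ _ (by simp), Fin.sum_univ_four]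
  simp [weight]
  ring

/-- `(a, b, c, d)` stands for `H ^ a * I ^ b * R⁻¹ ^ c * D⁻¹ ^ d`; these are `V₁, …, V₆`. -/
def generatorExponents : Finset (ℕ × ℕ × ℕ × ℕ) :=
  {(1, 1, 1, 0), (3, 0, 1, 0), (4, 0, 0, 1), (0, 2, 0, 1), (0, 3, 2, 0), (2, 1, 0, 1)}

theorem weight_eq_and_ne_zero_of_mem_generatorExponents :
    ∀ e ∈ generatorExponents,
      e.1 + 2 * e.2.1 = 3 * e.2.2.1 + 4 * e.2.2.2 ∧ e.2.2.1 + e.2.2.2 ≠ 0 := by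
  decide

theorem exists_generatorExponents_le {a b c d : ℕ} (h : a + 2 * b = 3 * c + 4 * d)
    (hcd : c + d ≠ 0) :
    ∃ e ∈ generatorExponents, e.1 ≤ a ∧ e.2.1 ≤ b ∧ e.2.2.1 ≤ c ∧ e.2.2.2 ≤ d := by
  simp only [generatorExponents, Finset.mem_insert, Finset.mem_singleton, exists_eq_or_imp,
    exists_eq_left]
  omega

variable (k : Type*) [Field k]

noncomputable def mono (a b c d : ℕ) : MvPolynomial (Fin 4) k :=
  X 0 ^ a * X 1 ^ b * X 2 ^ c * X 3 ^ d

theorem mono_add (a b c d a' b' c' d' : ℕ) :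
    mono k (a + a') (b + b') (c + c') (d + d') = mono k a b c d * mono k a' b' c' d' := by
  simp only [mono, pow_add]
  ring

theorem isWeightedHomogeneous_mono (a b c d : ℕ) :
    IsWeightedHomogeneous weight (mono k a b c d) (a + 2 * b - 3 * c - 4 * d : ℤ) := by
  have hX (i : Fin 4) (e : ℕ) := (isWeightedHomogeneous_X k weight i).pow e
  rw [mono]
  convert ((hX 0 a).mul (hX 1 b)).mul (hX 2 c) |>.mul (hX 3 d) using 1
  simp [weight]
  ring

theorem monomial_one_eq_mono (s : Fin 4 →₀ ℕ) :
    monomial s (1 : k) = mono k (s 0) (s 1) (s 2) (s 3) := by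
  rw [monomial_eq, C_1, one_mul, Finsupp.prod_fintype _ _ (fun _ => pow_zero _),
    Fin.prod_univ_four, mono]

def generators : Set (MvPolynomial (Fin 4) k) :=
  (fun e : ℕ × ℕ × ℕ × ℕ => mono k e.1 e.2.1 e.2.2.1 e.2.2.2) '' generatorExponents

theorem mono_mem_adjoin_generators {a b c d : ℕ} (h : a + 2 * b = 3 * c + 4 * d) :
    mono k a b c d ∈ Algebra.adjoin k (generators k) := by
  induction hn : c + d using Nat.strong_induction_on generalizing a b c d with
  | _ n ih =>
  rcases Nat.eq_zero_or_pos n with rfl | hpos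
  · obtain ⟨rfl, rfl, rfl, rfl⟩ : a = 0 ∧ b = 0 ∧ c = 0 ∧ d = 0 := by omega
    simp [mono]
  obtain ⟨e, he, ha, hb, hc, hd⟩ := exists_generatorExponents_le h (by omega)
  obtain ⟨he_weight, he_pos⟩ := weight_eq_and_ne_zero_of_mem_generatorExponents e he
  obtain ⟨a', rfl⟩ := Nat.exists_eq_add_of_le ha
  obtain ⟨b', rfl⟩ := Nat.exists_eq_add_of_le hb
  obtain ⟨c', rfl⟩ := Nat.exists_eq_add_of_le hc
  obtain ⟨d', rfl⟩ := Nat.exists_eq_add_of_le hd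
  rw [mono_add]
  exact mul_mem (Algebra.subset_adjoin ⟨e, he, rfl⟩) (ih _ (by omega) (by omega) rfl)

theorem weightZeroSubalgebra_eq_adjoin_generators :
    weightZeroSubalgebra k weight = Algebra.adjoin k (generators k) := by
  refine le_antisymm (fun p hp => ?_) (Algebra.adjoin_le ?_)
  · rw [p.as_sum]
    refine sum_mem fun s hs => ?_
    have hs_weight := weight_apply s ▸ hp (mem_support_iff.mp hs)
    rw [← mul_one (coeff s p), ← smul_eq_mul, ← smul_monomial, monomial_one_eq_mono]
    exact Subalgebra.smul_mem _ (mono_mem_adjoin_generators k (by omega)) _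
  · rintro _ ⟨⟨a, b, c, d⟩, he, rfl⟩
    obtain ⟨he_weight, -⟩ := weight_eq_and_ne_zero_of_mem_generatorExponents _ he
    have hzero : (a + 2 * b - 3 * c - 4 * d : ℤ) = 0 := by
      dsimp only at he_weight
      omega
    show IsWeightedHomogeneous weight (mono k a b c d) 0
    exact hzero ▸ isWeightedHomogeneous_mono k a b c d

theorem eq_map {F : Type*} [Field F] [Algebra k F] (H I R D : F) :
    Vring k F H I R D = (weightZeroSubalgebra k weight).map (aeval ![H, I, R⁻¹, D⁻¹]) := by
  rw [weightZeroSubalgebra_eq_adjoin_generators, AlgHom.map_adjoin, Vring, generators,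
    ← Set.image_comp]
  congr 1
  simp only [generatorExponents, Finset.coe_insert, Finset.coe_singleton, Set.image_insert_eq,
    Set.image_singleton, Function.comp_apply, mono, map_mul, map_pow, aeval_X,
    Matrix.cons_val_zero, Matrix.cons_val_one, Matrix.cons_val]
  ring_nf

end Vring

/-- The ring `S = k[V₁, …, V₆]` is integrally closed in its field of fractions. -/
theorem V_algebra_integrally_closed
    (k F : Type*) [Field k] [Field F] [Algebra k F]
    (H I R D : F)
    (hind : AlgebraicIndependent k ![H, I, R, D]) :
    ∀ u : F,
      (∃ s₁ ∈ Vring k F H I R D, ∃ s₂ ∈ Vring k F H I R D, s₂ ≠ 0 ∧ u * s₂ = s₁) →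
      IsIntegral (Vring k F H I R D) u →
      u ∈ Vring k F H I R D := by
  rintro u ⟨s₁, hs₁, s₂, hs₂, hs₂0, hu⟩ hint
  set x : Fin 4 → F := ![H, I, R⁻¹, D⁻¹]
  have hx : AlgebraicIndependent k x := by
    convert (hind.update_inv 2).update_inv 3 using 1
    funext i
    fin_cases i <;> rfl
  have hSB : Vring k F H I R D ≤ Algebra.adjoin k (Set.range x) := by
    rw [Vring.eq_map, Algebra.adjoin_range_eq_range_aeval]
    rintro _ ⟨p, -, rfl⟩
    exact ⟨p, rfl⟩
  have := IsIntegrallyClosed.of_equiv hx.aevalEquiv.toRingEquiv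
  have huB := Subalgebra.mem_of_isIntegral_of_mul_mem (hint.of_subalgebra_le hSB)
    (hSB hs₁) (hSB hs₂) hs₂0 hu
  rw [Algebra.adjoin_range_eq_range_aeval] at huB
  obtain ⟨p, rfl⟩ := huB
  rw [Vring.eq_map] at hs₁ hs₂ ⊢
  exact hx.aeval_mem_map_weightZeroSubalgebra hs₁ hs₂ hs₂0 hu
end
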